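/- Let G = (V, E) be a directed graph whose strongly connected components have vertex sets V₁, ..., V_t with internal edge sets E₁, ..., E_t, and let U be the set of edges between distinct components. Then HR(E, A) is isomorphic to HR(E₁, A) × ... × HR(E_t, A) × A^U. -/

import Mathlib

/-- A directed multigraph: edges with a source and a target vertex. -/
structure Dgraph (V : Type) (E : Type) where
  src : E → V
  tgt : E → V

namespace Dgraph

variable {V E : Type}

/-- The symmetrization of a digraph: each edge together with its formal reversal.
`Sum.inl e` is the edge `e` itself, `Sum.inr e` is its reversal `ē`. -/
def sym (G : Dgraph V E) : Dgraph V (E ⊕ E) where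
  src := Sum.elim G.src G.tgt
  tgt := Sum.elim G.tgt G.src

/-- A cycle: a list of pairwise distinct edges, consecutively incident,
and closed (the target of the last edge is the source of the first).
The empty list is the trivial cycle. -/
def IsCycle (G : Dgraph V E) (l : List E) : Prop :=
  l.Nodup ∧ l.Chain' (fun a b => G.tgt a = G.src b) ∧
    ∀ h : l ≠ [], G.tgt (l.getLast h) = G.src (l.head h)

/-- Adjacency in the underlying undirected graph. -/
def Adj (G : Dgraph V E) (x y : V) : Prop :=
  ∃ e, (G.src e = x ∧ G.tgt e = y) ∨ (G.src e = y ∧ G.tgt e = x)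

/-- Weak connectivity: the underlying undirected graph is connected. -/
def WeaklyConnected (G : Dgraph V E) : Prop :=
  ∀ x y : V, Relation.ReflTransGen G.Adj x y

/-- The underlying undirected graph is bipartite. -/
def Bipartite (G : Dgraph V E) : Prop :=
  ∃ c : V → Bool, ∀ e, c (G.src e) ≠ c (G.tgt e)

variable (A : Type) [AddCommGroup A]

/-- A function on the symmetrized edge set taking opposite values on reversed edges. -/
def Antisym (f : E ⊕ E → A) : Prop :=
  ∀ e : E, f (Sum.inr e) = - f (Sum.inl e)

/-- A function on edges is balanced if its sum along every cycle is zero. -/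
def BalancedE (G : Dgraph V E) (f : E → A) : Prop :=
  ∀ l : List E, G.IsCycle l → (l.map f).sum = 0

/-- A pair of a function `g` on vertices and `f` on edges is balanced if the
alternating sum `g v₁ + f e₁ + ⋯ + g vₙ + f eₙ` along every cycle is zero
(the vertices of a cycle are exactly the sources of its edges). -/
def BalancedVE (G : Dgraph V E) (g : V → A) (f : E → A) : Prop :=
  ∀ l : List E, G.IsCycle l → (l.map (fun e => g (G.src e) + f e)).sum = 0

variable {A}

lemma sum_map_add (l : List E) (f g : E → A) :
    (l.map (fun e => f e + g e)).sum = (l.map f).sum + (l.map g).sum := by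
  induction l with
  | nil => simp
  | cons a t ih => simp only [List.map_cons, List.sum_cons, ih]; abel

lemma sum_map_neg (l : List E) (f : E → A) :
    (l.map (fun e => - f e)).sum = - (l.map f).sum := by
  induction l with
  | nil => simp
  | cons a t ih => simp only [List.map_cons, List.sum_cons, ih]; abel

lemma sum_map_eq_zero (l : List E) (f : E → A) (h : ∀ e, f e = 0) :
    (l.map f).sum = 0 := by
  induction l with
  | nil => simp
  | cons a t ih => simp [h, ih]

variable (A)

/-- `HF(𝔼, A)`: the group of flexible-balanced functions on the symmetrized edges. -/
def HF (G : Dgraph V E) : AddSubgroup ((E ⊕ E) → A) where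
  carrier := {f | Antisym A f ∧ BalancedE A G.sym f}
  zero_mem' :=
    ⟨fun e => by simp, fun l _ => sum_map_eq_zero l _ (fun e => by simp)⟩
  add_mem' := by
    intro f g hf hg
    refine ⟨fun e => ?_, fun l hl => ?_⟩
    · have h1 := hf.1 e; have h2 := hg.1 e
      simp only [Pi.add_apply]
      rw [h1, h2]; abel
    · have hmap : l.map (f + g) = l.map (fun e => f e + g e) := rfl
      rw [hmap, sum_map_add l f g, hf.2 l hl, hg.2 l hl, add_zero]
  neg_mem' := by
    intro f hf
    refine ⟨fun e => ?_, fun l hl => ?_⟩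
    · simp only [Pi.neg_apply]; rw [hf.1 e]
    · have hmap : l.map (-f) = l.map (fun e => - f e) := rfl
      rw [hmap, sum_map_neg l f, hf.2 l hl, neg_zero]

/-- `WF(V ∪ 𝔼, A)`: the group of flexible-balanced functions on vertices and edges,
encoded as pairs (function on vertices, function on symmetrized edges). -/
def WF (G : Dgraph V E) : AddSubgroup ((V → A) × ((E ⊕ E) → A)) where
  carrier := {p | Antisym A p.2 ∧ BalancedVE A G.sym p.1 p.2}
  zero_mem' :=
    ⟨fun e => by simp, fun l _ => sum_map_eq_zero l _ (fun e => by simp)⟩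
  add_mem' := by
    intro p q hp hq
    refine ⟨fun e => ?_, fun l hl => ?_⟩
    · have h1 := hp.1 e; have h2 := hq.1 e
      simp only [Prod.snd_add, Pi.add_apply]
      rw [h1, h2]; abel
    · have h := sum_map_add l (fun e => p.1 (G.sym.src e) + p.2 e)
        (fun e => q.1 (G.sym.src e) + q.2 e)
      simp only [Prod.fst_add, Prod.snd_add, Pi.add_apply]
      have heq : (l.map (fun e => (p.1 (G.sym.src e) + q.1 (G.sym.src e)) + (p.2 e + q.2 e))).sum
          = (l.map (fun e => (p.1 (G.sym.src e) + p.2 e) + (q.1 (G.sym.src e) + q.2 e))).sum := by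
        congr 1; apply List.map_congr_left; intro e _; abel
      rw [heq, h, hp.2 l hl, hq.2 l hl, add_zero]
  neg_mem' := by
    intro p hp
    refine ⟨fun e => ?_, fun l hl => ?_⟩
    · simp only [Prod.snd_neg, Pi.neg_apply]; rw [hp.1 e]
    · have h := sum_map_neg l (fun e => p.1 (G.sym.src e) + p.2 e)
      simp only [Prod.fst_neg, Prod.snd_neg, Pi.neg_apply]
      have heq : (l.map (fun e => -p.1 (G.sym.src e) + -p.2 e)).sum
          = (l.map (fun e => -(p.1 (G.sym.src e) + p.2 e))).sum := by
        congr 1; apply List.map_congr_left; intro e _; abel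
      rw [heq, h, hp.2 l hl, neg_zero]

/-- `BF(V, A)`: the group of flexible-balanceable functions on vertices. -/
def BF (G : Dgraph V E) : AddSubgroup (V → A) where
  carrier := {g | ∃ f : (E ⊕ E) → A, (g, f) ∈ WF A G}
  zero_mem' := ⟨0, (WF A G).zero_mem⟩
  add_mem' := by
    rintro g1 g2 ⟨f1, h1⟩ ⟨f2, h2⟩
    exact ⟨f1 + f2, (WF A G).add_mem h1 h2⟩
  neg_mem' := by
    rintro g ⟨f, h⟩
    exact ⟨-f, (WF A G).neg_mem h⟩

/-- The subgroup of elements of order dividing 2. -/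
def Two : AddSubgroup A where
  carrier := {a | a + a = 0}
  zero_mem' := by simp
  add_mem' := by
    intro a b ha hb
    have h : a + b + (a + b) = (a + a) + (b + b) := by abel
    simp only [Set.mem_setOf_eq] at *
    rw [h, ha, hb, add_zero]
  neg_mem' := by
    intro a ha
    simp only [Set.mem_setOf_eq] at *
    rw [← neg_add]; simp [ha]

/-- `HR(E, A)`: the group of rigid-balanced functions on edges. -/
def HR (G : Dgraph V E) : AddSubgroup (E → A) where
  carrier := {f | BalancedE A G f}
  zero_mem' := fun l _ => sum_map_eq_zero l _ (fun e => by simp)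
  add_mem' := by
    intro f g hf hg l hl
    have hmap : l.map (f + g) = l.map (fun e => f e + g e) := rfl
    rw [hmap, sum_map_add l f g, hf l hl, hg l hl, add_zero]
  neg_mem' := by
    intro f hf l hl
    have hmap : l.map (-f) = l.map (fun e => - f e) := rfl
    rw [hmap, sum_map_neg l f, hf l hl, neg_zero]

/-- `WR(V ∪ E, A)`: the group of rigid-balanced functions on vertices and edges,
encoded as pairs (function on vertices, function on edges). -/
def WR (G : Dgraph V E) : AddSubgroup ((V → A) × (E → A)) where
  carrier := {p | BalancedVE A G p.1 p.2}
  zero_mem' := fun l _ => sum_map_eq_zero l _ (fun e => by simp)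
  add_mem' := by
    intro p q hp hq l hl
    have h := sum_map_add l (fun e => p.1 (G.src e) + p.2 e)
      (fun e => q.1 (G.src e) + q.2 e)
    simp only [Prod.fst_add, Prod.snd_add, Pi.add_apply]
    have heq : (l.map (fun e => (p.1 (G.src e) + q.1 (G.src e)) + (p.2 e + q.2 e))).sum
        = (l.map (fun e => (p.1 (G.src e) + p.2 e) + (q.1 (G.src e) + q.2 e))).sum := by
      congr 1; apply List.map_congr_left; intro e _; abel
    rw [heq, h, hp l hl, hq l hl, add_zero]
  neg_mem' := by
    intro p hp l hl
    have h := sum_map_neg l (fun e => p.1 (G.src e) + p.2 e)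
    simp only [Prod.fst_neg, Prod.snd_neg, Pi.neg_apply]
    have heq : (l.map (fun e => -p.1 (G.src e) + -p.2 e)).sum
        = (l.map (fun e => -(p.1 (G.src e) + p.2 e))).sum := by
      congr 1; apply List.map_congr_left; intro e _; abel
    rw [heq, h, hp l hl, neg_zero]

variable {A}

/-- One-step directed reachability. -/
def Step (G : Dgraph V E) (x y : V) : Prop := ∃ e, G.src e = x ∧ G.tgt e = y

/-- Directed reachability. -/
def Reach (G : Dgraph V E) : V → V → Prop := Relation.ReflTransGen G.Step

/-- Every vertex is reachable from every other vertex by a directed path. -/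
def StronglyConnected (G : Dgraph V E) : Prop := ∀ x y : V, G.Reach x y

/-- Mutual directed reachability as an equivalence (setoid) on vertices;
its classes are the strongly connected components. -/
def scSetoid (G : Dgraph V E) : Setoid V where
  r x y := G.Reach x y ∧ G.Reach y x
  iseqv := ⟨fun _ => ⟨.refl, .refl⟩, fun h => ⟨h.2, h.1⟩,
    fun h1 h2 => ⟨h1.1.trans h2.1, h2.2.trans h1.2⟩⟩

/-- The number `k̄(G)` of strongly connected components. -/
noncomputable def numSCC (G : Dgraph V E) : ℕ := Nat.card (Quotient G.scSetoid)

/-- The number `r(G)` of edges joining vertices in distinct strongly connected components. -/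
noncomputable def numCrossEdges (G : Dgraph V E) : ℕ :=
  Nat.card {e : E // ¬ G.scSetoid.r (G.src e) (G.tgt e)}

/-- A directed path from `x` to `y`: pairwise distinct, consecutively incident edges,
starting at `x` and ending at `y`; the empty path joins each vertex to itself. -/
def IsPathFrom (G : Dgraph V E) (l : List E) (x y : V) : Prop :=
  l.Nodup ∧ l.Chain' (fun a b => G.tgt a = G.src b) ∧
    ((l = [] ∧ x = y) ∨ ∃ h : l ≠ [], G.src (l.head h) = x ∧ G.tgt (l.getLast h) = y)

/-- Reorientation of the edges: edge `e` keeps its direction iff `o e = true`. -/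
def orient (G : Dgraph V E) (o : E → Bool) : Dgraph V E where
  src e := if o e then G.src e else G.tgt e
  tgt e := if o e then G.tgt e else G.src e

/-- The underlying edge of a symmetrized edge. -/
def proj : E ⊕ E → E := Sum.elim id id

/-- A cycle in the underlying *undirected* graph: edges may be traversed in either
direction, and the underlying edges are pairwise distinct. -/
def IsUCycle (G : Dgraph V E) (l : List (E ⊕ E)) : Prop :=
  (l.map proj).Nodup ∧ l.Chain' (fun a b => G.sym.tgt a = G.sym.src b) ∧
    ∀ h : l ≠ [], G.sym.tgt (l.getLast h) = G.sym.src (l.head h)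

variable (A)

/-- A function on the edges of an undirected graph is balanced if its sum along
every undirected cycle (each edge contributing its value regardless of the
traversal direction) is zero. -/
def UBalanced (G : Dgraph V E) (f : E → A) : Prop :=
  ∀ l : List (E ⊕ E), G.IsUCycle l → (l.map (fun ee => f (proj ee))).sum = 0

/-- The subgroup of functions on vertices vanishing at a chosen base vertex. -/
def vanishing (v₀ : V) : AddSubgroup (V → A) where
  carrier := {g | g v₀ = 0}
  zero_mem' := by simp
  add_mem' := by
    intro a b ha hb
    simp only [Set.mem_setOf_eq, Pi.add_apply] at *
    rw [ha, hb, add_zero]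
  neg_mem' := by
    intro a ha
    simp only [Set.mem_setOf_eq, Pi.neg_apply] at *
    rw [ha, neg_zero]

variable {A}

/-- The subgraph induced by a strongly connected component `j`. -/
def compGraph (G : Dgraph V E) (j : Quotient G.scSetoid) :
    Dgraph {v : V // Quotient.mk G.scSetoid v = j}
      {e : E // Quotient.mk G.scSetoid (G.src e) = j ∧ Quotient.mk G.scSetoid (G.tgt e) = j} where
  src e := ⟨G.src e.1, e.2.1⟩
  tgt e := ⟨G.tgt e.1, e.2.2⟩

end Dgraph

/-! A directed cycle never leaves the strongly connected component of its first vertex, so a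
function on `E` is balanced iff its restrictions to the components are; the values on cross
edges are unconstrained. Hence restriction is an isomorphism, inverted by gluing. -/

namespace Dgraph

variable {V E : Type} {A : Type} [AddCommGroup A] {G : Dgraph V E}

lemma IsCycle.exists_component {l : List E} (hl : G.IsCycle l) (hne : l ≠ []) :
    ∃ j : Quotient G.scSetoid, ∀ e ∈ l,
      Quotient.mk G.scSetoid (G.src e) = j ∧ Quotient.mk G.scSetoid (G.tgt e) = j := by
  obtain ⟨-, hchain, hclosed⟩ := hl
  have step (e : E) : G.Reach (G.src e) (G.tgt e) := .single ⟨e, rfl, rfl⟩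
  have from_head : ∀ e ∈ l, G.Reach (G.src (l.head hne)) (G.src e) :=
    hchain.induction _ _ (fun a _ hab h => hab ▸ h.tail ⟨a, rfl, rfl⟩) fun _ => .refl
  have to_last : ∀ e ∈ l, G.Reach (G.tgt e) (G.tgt (l.getLast hne)) :=
    hchain.backwards_induction _ _ (fun _ b hab h => (hab ▸ step b).trans h) fun _ => .refl
  refine ⟨Quotient.mk _ (G.src (l.head hne)), fun e he =>
    ⟨Quotient.sound ?_, Quotient.sound ?_⟩⟩
  · exact ⟨(step e).trans (hclosed hne ▸ to_last e he), from_head e he⟩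
  · exact ⟨hclosed hne ▸ to_last e he, (from_head e he).trans (step e)⟩

lemma isCycle_compGraph_iff (j : Quotient G.scSetoid)
    {l : List {e : E // Quotient.mk G.scSetoid (G.src e) = j ∧
      Quotient.mk G.scSetoid (G.tgt e) = j}} :
    (G.compGraph j).IsCycle l ↔ G.IsCycle (l.map Subtype.val) := by
  unfold IsCycle
  refine and_congr (List.nodup_map_iff Subtype.val_injective).symm
    (and_congr ?_ ?_)
  · rw [List.Chain', List.Chain', List.isChain_map]
    simp only [compGraph, Subtype.ext_iff]
  · simp only [ne_eq, List.map_eq_nil_iff, List.getLast_map, List.head_map, compGraph,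
      Subtype.ext_iff]

lemma BalancedE.compGraph {f : E → A} (hf : BalancedE A G f) (j : Quotient G.scSetoid) :
    BalancedE A (G.compGraph j) (fun e => f e.1) := fun l hl => by
  simpa only [List.map_map, Function.comp_def] using hf _ ((isCycle_compGraph_iff j).mp hl)

variable (G) in
noncomputable def glue (c : ∀ j : Quotient G.scSetoid, HR A (G.compGraph j))
    (u : {e : E // ¬ G.scSetoid.r (G.src e) (G.tgt e)} → A) (e : E) : A :=
  open Classical in
  if h : G.scSetoid.r (G.src e) (G.tgt e) then
    (c (Quotient.mk _ (G.src e))).1 ⟨e, rfl, (Quotient.sound h).symm⟩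
  else u ⟨e, h⟩

section glue

variable (c : ∀ j : Quotient G.scSetoid, HR A (G.compGraph j))
  (u : {e : E // ¬ G.scSetoid.r (G.src e) (G.tgt e)} → A)

lemma glue_of_mem_component {j : Quotient G.scSetoid} {e : E}
    (hs : Quotient.mk G.scSetoid (G.src e) = j) (ht : Quotient.mk G.scSetoid (G.tgt e) = j) :
    glue G c u e = (c j).1 ⟨e, hs, ht⟩ := by
  subst hs
  exact dif_pos (Quotient.exact ht.symm)

lemma glue_of_not_r {e : E} (h : ¬ G.scSetoid.r (G.src e) (G.tgt e)) :
    glue G c u e = u ⟨e, h⟩ :=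
  dif_neg h

lemma balancedE_glue : BalancedE A G (glue G c u) := by
  intro l hl
  rcases eq_or_ne l [] with rfl | hne
  · rfl
  obtain ⟨j, hj⟩ := hl.exists_component hne
  let l' : List {e : E // Quotient.mk G.scSetoid (G.src e) = j ∧
      Quotient.mk G.scSetoid (G.tgt e) = j} := l.attachWith _ hj
  have hl' : l'.map Subtype.val = l := List.attachWith_map_subtype_val _
  have hcycle : (G.compGraph j).IsCycle l' := (isCycle_compGraph_iff j).mpr (hl' ▸ hl)
  calc (l.map (glue G c u)).sum = (l'.map (c j).1).sum := by
        rw [← hl', List.map_map]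
        exact congrArg List.sum
          (List.map_congr_left fun e _ => glue_of_mem_component c u e.2.1 e.2.2)
    _ = 0 := (c j).2 l' hcycle

end glue

variable (A G) in
noncomputable def hrEquivComponents : HR A G ≃+
    ((∀ j : Quotient G.scSetoid, HR A (G.compGraph j)) ×
      ({e : E // ¬ G.scSetoid.r (G.src e) (G.tgt e)} → A)) where
  toFun f := (fun j => ⟨fun e => f.1 e.1, BalancedE.compGraph f.2 j⟩, fun e => f.1 e.1)
  invFun p := ⟨glue G p.1 p.2, balancedE_glue p.1 p.2⟩
  left_inv f := by
    ext e
    by_cases h : G.scSetoid.r (G.src e) (G.tgt e)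
    · exact glue_of_mem_component _ _ rfl (Quotient.sound h).symm
    · exact glue_of_not_r _ _ h
  right_inv p := by
    refine Prod.ext (funext fun j => Subtype.ext (funext fun e => ?_)) (funext fun e => ?_)
    · exact glue_of_mem_component p.1 p.2 e.2.1 e.2.2
    · exact glue_of_not_r p.1 p.2 e.2
  map_add' _ _ := rfl

end Dgraph

theorem stmt16_general (V E : Type) (A : Type) [AddCommGroup A]
    (G : Dgraph V E) :
    Nonempty (Dgraph.HR A G ≃+
      ((∀ j : Quotient G.scSetoid, Dgraph.HR A (G.compGraph j)) ×
       ({e : E // ¬ G.scSetoid.r (G.src e) (G.tgt e)} → A))) :=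
  ⟨Dgraph.hrEquivComponents A G⟩

/-- For a finite directed graph `G` with strongly connected components
indexed by `Quotient G.scSetoid`, with internal edge sets carried by the component
subgraphs and `U` the set of edges between distinct components, `HR(E, A)` is isomorphic
to the product of the groups `HR(Eⱼ, A)` times `A^U`. -/
theorem stmt16 (V E : Type) [Fintype V] [Fintype E] (A : Type) [AddCommGroup A]
    (G : Dgraph V E) :
    Nonempty (Dgraph.HR A G ≃+
      ((∀ j : Quotient G.scSetoid, Dgraph.HR A (G.compGraph j)) ×
       ({e : E // ¬ G.scSetoid.r (G.src e) (G.tgt e)} → A))) :=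
  stmt16_general V E A G
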